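/- arXiv:2101.00718 — 8 statements merged into one kernel-verified Lean document; each statement's English description precedes it below -/
import Mathlib

section
/- Let y be a string of length n and x a string of length m over the same alphabet. For all indices i, j with 1 ≤ i ≤ m and i ≤ j ≤ n, and every integer t ≥ 0, the prefix x[1..i] has a utd-match of cost t with y[j-i+1..j] if and only if one of the following two conditions holds: (i) x[i] = y[j] and x[1..i-1] has a utd-match of cost t with y[j-i+1..j-1]; (ii) t ≥ 1 and there exist integers h, k with 1 ≤ h, 1 ≤ k and h + k ≤ i such that x[i-k+1..i] = y[j-h-k+1..j-h], x[i-h-k+1..i-k] = y[j-h+1..j], and x[1..i-h-k] has a utd-match of cost t-1 with y[j-i+1..j-h-k]. -/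
/-- `UtdMatch u v t` holds when the equal-length strings `u` and `v` admit decompositions
into consecutive blocks `u = u₁⋯u_r`, `v = v₁⋯v_r` such that for every block index `s`
either `v_s = u_s`, or `u_s = z·w` and `v_s = w·z` for some nonempty strings `z, w`
(a translocated block), and exactly `t` of the blocks are translocated.
In particular the empty string has a utd-match of cost `0` with itself. -/
inductive UtdMatch {α : Type*} : List α → List α → ℕ → Prop
  | nil : UtdMatch [] [] 0
  | same (b : List α) {u v : List α} {t : ℕ} :
      UtdMatch u v t → UtdMatch (b ++ u) (b ++ v) t
  | trans {z w : List α} (hz : z ≠ []) (hw : w ≠ []) {u v : List α} {t : ℕ} :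
      UtdMatch u v t → UtdMatch (z ++ w ++ u) (w ++ z ++ v) (t + 1)

theorem UtdMatch.append {α : Type*} {u v u' v' : List α} {t t' : ℕ}
    (h1 : UtdMatch u v t) (h2 : UtdMatch u' v' t') :
    UtdMatch (u ++ u') (v ++ v') (t + t') := by
  induction h1 with
  | nil => simpa using h2
  | same b h ih => simpa [List.append_assoc] using UtdMatch.same b ih
  | trans hz hw h ih =>
      have := UtdMatch.trans hz hw ih
      simpa [List.append_assoc, Nat.add_right_comm] using this

theorem UtdMatch.rev {α : Type*} {u v : List α} {t : ℕ} (h : UtdMatch u v t) :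
    UtdMatch u.reverse v.reverse t := by
  induction h with
  | nil => exact .nil
  | same b h ih =>
      have := ih.append (UtdMatch.same b.reverse UtdMatch.nil)
      simpa [List.reverse_append] using this
  | trans hz hw h ih =>
      rename_i z w _ _ _
      have hz' : w.reverse ≠ [] := by simpa using hw
      have hw' : z.reverse ≠ [] := by simpa using hz
      have := ih.append (UtdMatch.trans hz' hw' UtdMatch.nil)
      simpa [List.reverse_append, List.append_assoc] using this

theorem utd_cons_iff {α : Type*} {u v : List α} {t : ℕ} :
    UtdMatch u v t ↔ (u = [] ∧ v = [] ∧ t = 0) ∨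
      (∃ a u' v', u = a :: u' ∧ v = a :: v' ∧ UtdMatch u' v' t) ∨
      (1 ≤ t ∧ ∃ z w u' v', z ≠ [] ∧ w ≠ [] ∧ u = z ++ w ++ u' ∧ v = w ++ z ++ v' ∧
        UtdMatch u' v' (t - 1)) := by
  constructor
  · intro h
    induction h with
    | nil => left; exact ⟨rfl, rfl, rfl⟩
    | same b h ih =>
        cases b with
        | nil => simpa using ih
        | cons a bs =>
            right; left
            exact ⟨a, bs ++ _, bs ++ _, by simp, by simp, UtdMatch.same bs h⟩
    | trans hz hw h ih =>
        right; right
        exact ⟨by omega, _, _, _, _, hz, hw, rfl, rfl, by simpa using h⟩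
  · rintro (⟨rfl, rfl, rfl⟩ | ⟨a, u', v', rfl, rfl, h⟩ | ⟨ht, z, w, u', v', hz, hw, rfl, rfl, h⟩)
    · exact .nil
    · simpa using UtdMatch.same [a] h
    · have := UtdMatch.trans hz hw h
      have h1 : t - 1 + 1 = t := by omega
      rwa [h1] at this

theorem utd_snoc_iff {α : Type*} {u v : List α} {t : ℕ} :
    UtdMatch u v t ↔ (u = [] ∧ v = [] ∧ t = 0) ∨
      (∃ a u' v', u = u' ++ [a] ∧ v = v' ++ [a] ∧ UtdMatch u' v' t) ∨
      (1 ≤ t ∧ ∃ z w u' v', z ≠ [] ∧ w ≠ [] ∧ u = u' ++ z ++ w ∧ v = v' ++ w ++ z ∧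
        UtdMatch u' v' (t - 1)) := by
  constructor
  · intro h
    rcases utd_cons_iff.mp h.rev with ⟨h1, h2, h3⟩ | ⟨a, u', v', h1, h2, h3⟩ |
      ⟨ht, z, w, u', v', hz, hw, h1, h2, h3⟩
    · left
      refine ⟨?_, ?_, h3⟩ <;> simp_all [List.reverse_eq_nil_iff]
    · right; left
      refine ⟨a, u'.reverse, v'.reverse, ?_, ?_, by simpa using h3.rev⟩
      · rw [← u.reverse_reverse, h1]; simp
      · rw [← v.reverse_reverse, h2]; simp
    · right; right
      refine ⟨ht, w.reverse, z.reverse, u'.reverse, v'.reverse, by simpa using hw,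
        by simpa using hz, ?_, ?_, by simpa using h3.rev⟩
      · rw [← u.reverse_reverse, h1]; simp [List.reverse_append, List.append_assoc]
      · rw [← v.reverse_reverse, h2]; simp [List.reverse_append, List.append_assoc]
  · rintro (⟨rfl, rfl, rfl⟩ | ⟨a, u', v', rfl, rfl, h⟩ | ⟨ht, z, w, u', v', hz, hw, rfl, rfl, h⟩)
    · exact .nil
    · simpa using h.append (UtdMatch.same [a] UtdMatch.nil)
    · have := h.append (UtdMatch.trans hz hw UtdMatch.nil)
      have h1 : t - 1 + (0 + 1) = t := by omega
      simpa [h1, List.append_assoc] using this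

theorem seg1 {α : Type*} (L : List α) {a b : ℕ} (hab : a ≤ b) :
    L.take a ++ (L.take b).drop a = L.take b := by
  have h1 : L.take a = (L.take b).take a := by
    rw [List.take_take]; congr 1; omega
  rw [h1]; exact List.take_append_drop a (L.take b)

theorem seg2 {α : Type*} (L : List α) {a b c : ℕ} (hab : a ≤ b) (hbc : b ≤ c) :
    (L.take b).drop a ++ (L.take c).drop b = (L.take c).drop a := by
  have h1 : L.take b = (L.take c).take b := by
    rw [List.take_take]; congr 1; omega
  have h2 : (L.take c).drop b = ((L.take c).drop a).drop (b - a) := by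
    rw [List.drop_drop]; congr 1; omega
  rw [h1, h2, List.drop_take]
  have h3 : b - a = b ⊓ c - a := by omega
  rw [h3]
  exact List.take_append_drop _ _

/-- For all indices `i, j` with `1 ≤ i ≤ m` and `i ≤ j ≤ n`, and every `t ≥ 0`,
the prefix `x[1..i]` has a utd-match of cost `t` with `y[j-i+1..j]` if and only if either
(i) `x[i] = y[j]` and `x[1..i-1]` has a utd-match of cost `t` with `y[j-i+1..j-1]`, or
(ii) `t ≥ 1` and there are `h, k ≥ 1` with `h + k ≤ i` such that
`x[i-k+1..i] = y[j-h-k+1..j-h]`, `x[i-h-k+1..i-k] = y[j-h+1..j]`, and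
`x[1..i-h-k]` has a utd-match of cost `t-1` with `y[j-i+1..j-h-k]`. -/
theorem utd_match_recurrence {α : Type*} (x y : List α) (m n i j t : ℕ)
    (hm : x.length = m) (hn : y.length = n)
    (hi : 1 ≤ i) (him : i ≤ m) (hij : i ≤ j) (hjn : j ≤ n) :
    UtdMatch (x.take i) ((y.take j).drop (j - i)) t ↔
      ((x[i - 1]'(by omega) = y[j - 1]'(by omega) ∧
          UtdMatch (x.take (i - 1)) ((y.take (j - 1)).drop (j - i)) t) ∨
        (1 ≤ t ∧ ∃ h k : ℕ, 1 ≤ h ∧ 1 ≤ k ∧ h + k ≤ i ∧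
          (x.take i).drop (i - k) = (y.take (j - h)).drop (j - h - k) ∧
          (x.take (i - k)).drop (i - h - k) = (y.take j).drop (j - h) ∧
          UtdMatch (x.take (i - h - k)) ((y.take (j - h - k)).drop (j - i)) (t - 1))) := by
  set u : List α := x.take i with hueq
  set v : List α := (y.take j).drop (j - i) with hveq
  have hul : u.length = i := by rw [hueq]; simp; omega
  have hvl : v.length = i := by rw [hveq]; simp; omega
  have hut : ∀ p, p ≤ i → u.take p = x.take p := by
    intro p hp
    rw [hueq, List.take_take]
    have : p ⊓ i = p := by omega
    rw [this]
  have hvt : ∀ p, p ≤ i → v.take p = (y.take (j - i + p)).drop (j - i) := by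
    intro p hp
    rw [hveq, List.take_drop, List.take_take]
    have : (j - i + p) ⊓ j = j - i + p := by omega
    rw [this]
  have hvd : ∀ q, v.drop q = (y.take j).drop (j - i + q) := by
    intro q
    rw [hveq, List.drop_drop]
  have hu_get : u[i-1]'(by omega) = x[i-1]'(by omega) := List.getElem_take
  have hv_get : v[i-1]'(by omega) = y[j-1]'(by omega) := by
    have e : j - i + (i - 1) = j - 1 := by omega
    calc v[i-1]'(by omega) = (y.take j)[j-i+(i-1)]'(by simp; omega) := List.getElem_drop
      _ = y[j-i+(i-1)]'(by omega) := List.getElem_take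
      _ = y[j-1]'(by omega) := by simp only [e]
  rw [utd_snoc_iff]
  constructor
  · rintro (⟨h1, -, -⟩ | ⟨a, u', v', h1, h2, h3⟩ | ⟨ht, z, w, u', v', hz, hw, h1, h2, h3⟩)
    · exfalso; rw [h1] at hul; simp at hul; omega
    · left
      have hul' : u'.length = i - 1 := by
        have := congrArg List.length h1; simp [hul] at this; omega
      have hvl' : v'.length = i - 1 := by
        have := congrArg List.length h2; simp [hvl] at this; omega
      have hu' : u' = x.take (i - 1) := by
        rw [← hut (i-1) (by omega), h1]
        exact (List.take_left' hul').symm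
      have hv' : v' = (y.take (j - 1)).drop (j - i) := by
        have e : j - i + (i - 1) = j - 1 := by omega
        rw [← e, ← hvt (i-1) (by omega), h2]
        exact (List.take_left' hvl').symm
      have hau : a = x[i-1]'(by omega) := by
        rw [← hu_get]
        have h4 : u[i-1]? = some a := by
          rw [h1, ← hul']
          exact List.getElem?_concat_length
        have h5 : u[i-1]? = some (u[i-1]'(by omega)) := List.getElem?_eq_getElem (by omega)
        exact Option.some.inj (h4.symm.trans h5)
      have hav : a = y[j-1]'(by omega) := by
        rw [← hv_get]
        have h4 : v[i-1]? = some a := by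
          rw [h2, ← hvl']
          exact List.getElem?_concat_length
        have h5 : v[i-1]? = some (v[i-1]'(by omega)) := List.getElem?_eq_getElem (by omega)
        exact Option.some.inj (h4.symm.trans h5)
      refine ⟨by rw [← hau]; exact hav, ?_⟩
      rw [← hu', ← hv']; exact h3
    · right
      have hzl : 1 ≤ z.length := List.length_pos_iff.mpr hz
      have hwl : 1 ≤ w.length := List.length_pos_iff.mpr hw
      have hul' : u'.length + z.length + w.length = i := by
        have := congrArg List.length h1; simp [hul] at this; omega
      have hvl' : v'.length + z.length + w.length = i := by
        have := congrArg List.length h2; simp [hvl] at this; omega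
      refine ⟨ht, z.length, w.length, hzl, hwl, by omega, ?_, ?_, ?_⟩
      · have w_u : u.drop (i - w.length) = w := by
          rw [h1]
          exact List.drop_left' (by simp; omega)
        have t1 : v.take (i - z.length) = (y.take (j - z.length)).drop (j - i) := by
          have e : j - i + (i - z.length) = j - z.length := by omega
          rw [hvt (i - z.length) (by omega), e]
        have w_v : (y.take (j - z.length)).drop (j - z.length - w.length) = w := by
          have e : j - i + (i - z.length - w.length) = j - z.length - w.length := by omega
          rw [← e, ← List.drop_drop, ← t1, h2]
          have t2 : (v' ++ w ++ z).take (i - z.length) = v' ++ w :=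
            List.take_left' (by simp; omega)
          rw [t2]
          exact List.drop_left' (by omega)
        rw [w_u]; exact w_v.symm
      · have z_u : (x.take (i - w.length)).drop (i - z.length - w.length) = z := by
          rw [← hut (i - w.length) (by omega), h1]
          have t2 : (u' ++ z ++ w).take (i - w.length) = u' ++ z :=
            List.take_left' (by simp; omega)
          rw [t2]
          exact List.drop_left' (by omega)
        have z_v : (y.take j).drop (j - z.length) = z := by
          have e : j - i + (i - z.length) = j - z.length := by omega
          rw [← e, ← hvd, h2]
          exact List.drop_left' (by simp; omega)
        rw [z_u]; exact z_v.symm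
      · have eu : x.take (i - z.length - w.length) = u' := by
          rw [← hut (i - z.length - w.length) (by omega), h1, List.append_assoc]
          exact List.take_left' (by omega)
        have ev : (y.take (j - z.length - w.length)).drop (j - i) = v' := by
          have e : j - i + (i - z.length - w.length) = j - z.length - w.length := by omega
          rw [← e, ← hvt (i - z.length - w.length) (by omega), h2, List.append_assoc]
          exact List.take_left' (by omega)
        rw [eu, ev]; exact h3
  · rintro (⟨heq, hmatch⟩ | ⟨ht, zl, wl, hzl, hwl, hzw, e1, e2, e3⟩)
    · refine Or.inr (Or.inl ⟨x[i-1]'(by omega), x.take (i-1),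
        (y.take (j-1)).drop (j - i), ?_, ?_, hmatch⟩)
      · have c := List.take_concat_get (by omega : i - 1 < u.length)
        rw [List.concat_eq_append] at c
        have e : i - 1 + 1 = i := by omega
        rw [e, List.take_of_length_le hul.le] at c
        refine c.symm.trans ?_
        rw [hut (i-1) (by omega), hu_get]
      · have c := List.take_concat_get (by omega : i - 1 < v.length)
        rw [List.concat_eq_append] at c
        have e : i - 1 + 1 = i := by omega
        rw [e, List.take_of_length_le hvl.le] at c
        have e2 : j - i + (i - 1) = j - 1 := by omega
        refine c.symm.trans ?_
        rw [hvt (i-1) (by omega), e2, hv_get, ← heq]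
    · refine Or.inr (Or.inr ⟨ht, (x.take (i - wl)).drop (i - zl - wl),
        (x.take i).drop (i - wl), x.take (i - zl - wl),
        (y.take (j - zl - wl)).drop (j - i), ?_, ?_, ?_, ?_, e3⟩)
      · apply List.length_pos_iff.mp
        simp; omega
      · apply List.length_pos_iff.mp
        simp; omega
      · rw [hueq]
        conv_lhs => rw [← seg1 x (show i - wl ≤ i by omega)]
        conv_lhs => rw [← seg1 x (show i - zl - wl ≤ i - wl by omega)]
      · rw [e1, e2, hveq,
          seg2 y (show j - i ≤ j - zl - wl by omega) (show j - zl - wl ≤ j - zl by omega),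
          seg2 y (show j - i ≤ j - zl by omega) (show j - zl ≤ j by omega)]
end

section
/- Let y and x be strings over the same alphabet and let s, u, w, w', z be strings such that |s| = |u|, |z| > 0, |w'| > |w| > 0, s has a utd-match with u, s·w·z is a prefix of y, u·z·w is a prefix of x, s·w'·z is a prefix of y, and u·z·w' is a prefix of x. Set i = |s·w·z| and j = |s·w'·z|. Then the factor x[i+1..j] has a utd-match with the factor y[i+1..j]. -/
/-- `u ⊤ v`: `u` and `v` have a utd-match (of some cost). -/
def Utd {α : Type*} (u v : List α) : Prop := ∃ t, UtdMatch u v t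

/-!
Write `w' = w·r`. Comparing the two prefixes `s·w·z` and `s·w·r·z` of `y` shows that
`z` is a prefix of `r·z`, say `r·z = z·t`, and the two factors in question are exactly `r`
(in `x = u·z·w·r⋯`) and `t` (in `y = s·w·z·t⋯`). A solution of `r·z = z·t` makes `r` and `t`
conjugate, and conjugate strings `p·q`, `q·p` are matched by a single translocated block.
-/

namespace List

variable {α : Type*}

theorem isRotated_of_append_eq_append {r z t : List α} (h : r ++ z = z ++ t) : r ~r t := by
  rcases append_eq_append_iff.mp h with ⟨a, hzr, hza⟩ | ⟨c, rfl, rfl⟩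
  · rcases eq_or_ne r [] with rfl | hr
    · have ht : t = [] := by simpa using h
      rw [ht]
    · have : a.length < z.length := by
        rw [hzr, length_append]
        exact Nat.lt_add_of_pos_left (length_pos_iff.mpr hr)
      exact isRotated_of_append_eq_append (hzr.symm.trans hza)
  · exact isRotated_append
termination_by z.length

theorem drop_take_eq_of_append_prefix {p q l : List α} (h : p ++ q <+: l) :
    (l.take (p.length + q.length)).drop p.length = q := by
  rw [← length_append, ← prefix_iff_eq_take.mp h, drop_left]

end List

open List

theorem utd_append_comm {α : Type*} (p q : List α) : Utd (p ++ q) (q ++ p) := by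
  rcases eq_or_ne p [] with rfl | hp
  · exact ⟨0, by simpa using UtdMatch.same q UtdMatch.nil⟩
  rcases eq_or_ne q [] with rfl | hq
  · exact ⟨0, by simpa using UtdMatch.same p UtdMatch.nil⟩
  exact ⟨1, by simpa using UtdMatch.trans hp hq UtdMatch.nil⟩

theorem utd_of_isRotated {α : Type*} {l l' : List α} (h : l ~r l') : Utd l l' := by
  obtain ⟨n, rfl⟩ := h
  rw [rotate_eq_drop_append_take_mod]
  conv_lhs => rw [← take_append_drop (n % l.length) l]
  exact utd_append_comm _ _

theorem redundant_translocation_attempts_general {α : Type*} (x y s u w w' z : List α)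
    (hlen : s.length = u.length)
    (hww' : w.length < w'.length)
    (h1 : (s ++ w ++ z) <+: y)
    (h3 : (s ++ w' ++ z) <+: y) (h4 : (u ++ z ++ w') <+: x) :
    Utd ((x.take (s ++ w' ++ z).length).drop (s ++ w ++ z).length)
        ((y.take (s ++ w' ++ z).length).drop (s ++ w ++ z).length) := by
  have hwz : w ++ z <+: w' ++ z := by
    have := prefix_of_prefix_length_le h1 h3 (by simp; omega)
    simpa only [append_assoc, prefix_append_right_inj] using this
  obtain ⟨r, rfl⟩ : w <+: w' :=
    prefix_of_prefix_length_le (prefix_append w z |>.trans hwz) (prefix_append w' z) hww'.le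
  obtain ⟨t, hzt⟩ : z <+: r ++ z := by
    simpa only [append_assoc, prefix_append_right_inj] using hwz
  have hrt : r.length = t.length := by simpa [add_comm] using congrArg length hzt.symm
  have hx : (x.take (s ++ (w ++ r) ++ z).length).drop (s ++ w ++ z).length = r := by
    rw [show (s ++ w ++ z).length = (u ++ z ++ w).length by simp [hlen]; omega,
      show (s ++ (w ++ r) ++ z).length = (u ++ z ++ w).length + r.length by simp [hlen]; omega]
    exact drop_take_eq_of_append_prefix (by simpa using h4)
  have hy : (y.take (s ++ (w ++ r) ++ z).length).drop (s ++ w ++ z).length = t := by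
    rw [show (s ++ (w ++ r) ++ z).length = (s ++ w ++ z).length + t.length by simp; omega]
    exact drop_take_eq_of_append_prefix (by simpa [← hzt] using h3)
  rw [hx, hy]
  exact utd_of_isRotated (isRotated_of_append_eq_append hzt.symm)

/-- If `|s| = |u|`, `|z| > 0`, `|w'| > |w| > 0`, `s ⊤ u`, `s·w·z` and `s·w'·z`
are prefixes of `y`, and `u·z·w` and `u·z·w'` are prefixes of `x`, then, setting
`i = |s·w·z|` and `j = |s·w'·z|`, the factor `x[i+1..j]` has a utd-match with the factor
`y[i+1..j]`. -/
theorem redundant_translocation_attempts {α : Type*} (x y s u w w' z : List α)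
    (hlen : s.length = u.length) (hz : 0 < z.length)
    (hw : 0 < w.length) (hww' : w.length < w'.length)
    (hsu : Utd s u)
    (h1 : (s ++ w ++ z) <+: y) (h2 : (u ++ z ++ w) <+: x)
    (h3 : (s ++ w' ++ z) <+: y) (h4 : (u ++ z ++ w') <+: x) :
    Utd ((x.take (s ++ w' ++ z).length).drop (s ++ w ++ z).length)
        ((y.take (s ++ w' ++ z).length).drop (s ++ w ++ z).length) :=
  redundant_translocation_attempts_general x y s u w w' z hlen hww' h1 h3 h4
end

section
/- Let y and x be strings over the same alphabet and let s, u, w, w', z be strings such that |s| = |u|, |z| > 0, |w'| > |w| > 0, s·w·z is a prefix of y, u·z·w is a prefix of x, s·w'·z is a prefix of y, u·z·w' is a prefix of x, and additionally |w'| ≥ |w| + |z|. Set i = |s·w·z| and j = |s·w'·z|. Then there exists a (possibly empty) string a such that w' = w·z·a, y[i+1..j] = a·z and x[i+1..j] = z·a; in particular x[i+1..j] has a utd-match with y[i+1..j]. -/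
/-- Case (a): With the prefix hypotheses and additionally `|w'| ≥ |w| + |z|`,
setting `i = |s·w·z|` and `j = |s·w'·z|`, there exists a (possibly empty) string `a` such
that `w' = w·z·a`, `y[i+1..j] = a·z` and `x[i+1..j] = z·a`; in particular `x[i+1..j]` has a
utd-match with `y[i+1..j]`. -/
theorem redundant_translocation_case_a {α : Type*} (x y s u w w' z : List α)
    (hlen : s.length = u.length) (hz : 0 < z.length)
    (hw : 0 < w.length) (hww' : w.length < w'.length)
    (h1 : (s ++ w ++ z) <+: y) (h2 : (u ++ z ++ w) <+: x)
    (h3 : (s ++ w' ++ z) <+: y) (h4 : (u ++ z ++ w') <+: x)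
    (hcase : w.length + z.length ≤ w'.length) :
    ∃ a : List α, w' = w ++ z ++ a ∧
      ((y.take (s ++ w' ++ z).length).drop (s ++ w ++ z).length) = a ++ z ∧
      ((x.take (s ++ w' ++ z).length).drop (s ++ w ++ z).length) = z ++ a ∧
      Utd ((x.take (s ++ w' ++ z).length).drop (s ++ w ++ z).length)
          ((y.take (s ++ w' ++ z).length).drop (s ++ w ++ z).length) := by
  -- step 1: w ++ z is a prefix of w'
  have hp1 : (s ++ w ++ z) <+: (s ++ w' ++ z) :=
    List.prefix_of_prefix_length_le h1 h3 (by simp; omega)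
  rw [List.append_assoc, List.append_assoc, List.prefix_append_right_inj] at hp1
  have hp2 : (w ++ z) <+: w' :=
    List.prefix_of_prefix_length_le hp1 (List.prefix_append w' z) (by simp; omega)
  obtain ⟨a, ha⟩ := hp2
  have hy : ((y.take (s ++ w' ++ z).length).drop (s ++ w ++ z).length) = a ++ z := by
    have := List.prefix_iff_eq_take.mp h3
    rw [← this, ← ha]
    simp [List.append_assoc]
  have hx : ((x.take (s ++ w' ++ z).length).drop (s ++ w ++ z).length) = z ++ a := by
    have hjl : (s ++ w' ++ z).length = (u ++ z ++ w').length := by simp; omega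
    have := List.prefix_iff_eq_take.mp h4
    rw [hjl, ← this, ← ha]
    rw [show u ++ z ++ (w ++ z ++ a) = (u ++ (z ++ w)) ++ (z ++ a) by simp,
      show (s ++ w ++ z).length = (u ++ (z ++ w)).length by simp; omega,
      List.drop_left]
  refine ⟨a, by rw [← ha, List.append_assoc], hy, hx, ?_⟩
  rw [hx, hy]
  rcases eq_or_ne a [] with rfl | hane
  · exact ⟨0, by simpa using UtdMatch.same z UtdMatch.nil⟩
  · exact ⟨1, by simpa using UtdMatch.trans (List.ne_nil_of_length_pos hz) hane UtdMatch.nil⟩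
end

section
/- Let y and x be strings over the same alphabet and let s, u, w, w', z be strings such that |s| = |u|, |z| > 0, |w'| > |w| > 0, s·w·z is a prefix of y, u·z·w is a prefix of x, s·w'·z is a prefix of y, u·z·w' is a prefix of x, and additionally |w| + |z|/2 ≤ |w'| < |w| + |z| (that is, |z| ≤ 2(|w'| − |w|) and |w'| − |w| < |z|). Set i = |s·w·z| and j = |s·w'·z|. Then there exist strings a and b such that z = b·a·b, w' = w·b·a, y[i+1..j] = a·b and x[i+1..j] = b·a; in particular x[i+1..j] has a utd-match with y[i+1..j]. -/
/-- Case (b): With the prefix hypotheses and additionally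
`|w| + |z|/2 ≤ |w'| < |w| + |z|` (i.e. `|z| ≤ 2(|w'| − |w|)` and `|w'| − |w| < |z|`),
setting `i = |s·w·z|` and `j = |s·w'·z|`, there exist strings `a` and `b` such that
`z = b·a·b`, `w' = w·b·a`, `y[i+1..j] = a·b` and `x[i+1..j] = b·a`; in particular
`x[i+1..j]` has a utd-match with `y[i+1..j]`. -/
theorem redundant_translocation_case_b {α : Type*} (x y s u w w' z : List α)
    (hlen : s.length = u.length) (hz : 0 < z.length)
    (hw : 0 < w.length) (hww' : w.length < w'.length)
    (h1 : (s ++ w ++ z) <+: y) (h2 : (u ++ z ++ w) <+: x)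
    (h3 : (s ++ w' ++ z) <+: y) (h4 : (u ++ z ++ w') <+: x)
    (hcase1 : z.length ≤ 2 * (w'.length - w.length))
    (hcase2 : w'.length - w.length < z.length) :
    ∃ a b : List α, z = b ++ a ++ b ∧ w' = w ++ b ++ a ∧
      ((y.take (s ++ w' ++ z).length).drop (s ++ w ++ z).length) = a ++ b ∧
      ((x.take (s ++ w' ++ z).length).drop (s ++ w ++ z).length) = b ++ a ∧
      Utd ((x.take (s ++ w' ++ z).length).drop (s ++ w ++ z).length)
          ((y.take (s ++ w' ++ z).length).drop (s ++ w ++ z).length) := by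
  -- common notation
  have hA : (s ++ w ++ z) <+: (s ++ w' ++ z) :=
    List.prefix_of_prefix_length_le h1 h3 (by simp; omega)
  obtain ⟨t, ht⟩ := hA
  have hB : (u ++ z ++ w) <+: (u ++ z ++ w') :=
    List.prefix_of_prefix_length_le h2 h4 (by simp; omega)
  obtain ⟨t', ht'⟩ := hB
  have hX : w ++ t' = w' := by
    have := ht'
    simp only [List.append_assoc] at this
    exact List.append_cancel_left (List.append_cancel_left this)
  have hY : w ++ (z ++ t) = w' ++ z := by
    have := ht
    simp only [List.append_assoc] at this
    exact List.append_cancel_left this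
  have ht'len : t'.length = w'.length - w.length := by
    have := congrArg List.length hX
    simp at this; omega
  have heq : z ++ t = t' ++ z := by
    rw [← hX, List.append_assoc] at hY
    exact List.append_cancel_left hY
  have htlen : t.length = w'.length - w.length := by
    have := congrArg List.length heq
    simp at this; omega
  have ht'z : t' <+: z := by
    refine List.prefix_of_prefix_length_le ?_ (List.prefix_append z t) (by omega)
    rw [heq]; exact List.prefix_append t' z
  obtain ⟨m, hm⟩ := ht'z
  have hmlen : m.length = z.length - t'.length := by
    have := congrArg List.length hm; simp at this; omega
  have heq2 : m ++ t = t' ++ m := by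
    rw [← hm, List.append_assoc] at heq
    exact List.append_cancel_left heq
  have hmt' : m <+: t' := by
    refine List.prefix_of_prefix_length_le ?_ (List.prefix_append t' m) (by omega)
    rw [← heq2]; exact List.prefix_append m t
  obtain ⟨p, hp⟩ := hmt'
  have htval : t = p ++ m := by
    rw [← hp, List.append_assoc] at heq2
    exact List.append_cancel_left heq2
  have hyseg : (y.take (s ++ w' ++ z).length).drop (s ++ w ++ z).length = p ++ m := by
    have hy : y.take (s ++ w' ++ z).length = s ++ w' ++ z := by
      obtain ⟨r, hr⟩ := h3
      rw [← hr, List.take_left]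
    rw [hy, ← ht, List.drop_left, htval]
  have hxseg : (x.take (s ++ w' ++ z).length).drop (s ++ w ++ z).length = m ++ p := by
    have hjl : (s ++ w' ++ z).length = (u ++ z ++ w').length := by simp; omega
    have hx : x.take (s ++ w' ++ z).length = u ++ z ++ w' := by
      obtain ⟨r, hr⟩ := h4
      rw [hjl, ← hr, List.take_left]
    have hil : (s ++ w ++ z).length = (u ++ z ++ w).length := by simp; omega
    rw [hx, hil, ← ht', List.drop_left, ← hp]
  refine ⟨p, m, ?_, ?_, hyseg, hxseg, ?_⟩
  · rw [← hm, ← hp]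
  · rw [← hX, ← hp, List.append_assoc]
  · rw [hxseg, hyseg]
    have hmne : m ≠ [] := by
      intro h; rw [h] at hmlen; simp at hmlen; omega
    rcases eq_or_ne p [] with hpe | hpne
    · subst hpe
      exact ⟨0, by simpa using UtdMatch.same m (UtdMatch.nil)⟩
    · exact ⟨1, by simpa using UtdMatch.trans hmne hpne (UtdMatch.nil)⟩
end

section
/- Define μ : ℕ → ℕ by the recursion μ(0) = 1 and μ(k+1) = Σ_{h=0}^{k} μ(h) + Σ_{h=1}^{⌊(k−1)/2⌋} μ(k−2h−1) for k ≥ 0 (where the second sum is empty when ⌊(k−1)/2⌋ < 1). Then μ(i+1) ≤ 3^i for all i ≥ 0. -/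
/-- Define `μ : ℕ → ℕ` by `μ(0) = 1` and
`μ(k+1) = Σ_{h=0}^{k} μ(h) + Σ_{h=1}^{⌊(k−1)/2⌋} μ(k−2h−1)` for `k ≥ 0`
(the second sum being empty when `⌊(k−1)/2⌋ < 1`). Then `μ(i+1) ≤ 3^i` for all `i ≥ 0`. -/
theorem mu_le_three_pow (μ : ℕ → ℕ) (h0 : μ 0 = 1)
    (hrec : ∀ k : ℕ, μ (k + 1) =
      (∑ h ∈ Finset.range (k + 1), μ h) +
        ∑ h ∈ Finset.Icc 1 ((k - 1) / 2), μ (k - 2 * h - 1)) :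
    ∀ i : ℕ, μ (i + 1) ≤ 3 ^ i := by
  have h1 : μ 1 = 1 := by
    have := hrec 0
    simpa [h0] using this
  have key : ∀ k : ℕ, μ (k + 2) ≤ 3 * μ (k + 1) := by
    intro k
    have hA : ∑ h ∈ Finset.range (k + 1), μ h ≤ μ (k + 1) := by
      rw [hrec k]; exact Nat.le_add_right _ _
    have hB : ∑ h ∈ Finset.Icc 1 (k / 2), μ (k - 2 * h) ≤
        ∑ h ∈ Finset.range (k + 1), μ h := by
      have hinj : ∀ a ∈ Finset.Icc 1 (k / 2), ∀ b ∈ Finset.Icc 1 (k / 2),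
          (fun h => k - 2 * h) a = (fun h => k - 2 * h) b → a = b := by
        intro a ha b hb hab
        simp only [Finset.mem_Icc] at ha hb
        simp only at hab
        omega
      rw [show (∑ h ∈ Finset.Icc 1 (k / 2), μ (k - 2 * h)) =
          ∑ m ∈ (Finset.Icc 1 (k / 2)).image (fun h => k - 2 * h), μ m from
        (Finset.sum_image hinj).symm]
      apply Finset.sum_le_sum_of_subset
      intro m hm
      simp only [Finset.mem_image, Finset.mem_Icc] at hm
      simp only [Finset.mem_range]
      omega
    have hr := hrec (k + 1)
    have hs : ∑ h ∈ Finset.Icc 1 ((k + 1 - 1) / 2), μ (k + 1 - 2 * h - 1) =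
        ∑ h ∈ Finset.Icc 1 (k / 2), μ (k - 2 * h) := by
      apply Finset.sum_congr (by norm_num)
      intro h hh
      simp only [Finset.mem_Icc] at hh
      congr 1
      omega
    rw [hs, Finset.sum_range_succ] at hr
    calc μ (k + 2) = ∑ x ∈ Finset.range (k + 1), μ x + μ (k + 1) +
          ∑ h ∈ Finset.Icc 1 (k / 2), μ (k - 2 * h) := hr
      _ ≤ μ (k + 1) + μ (k + 1) + μ (k + 1) :=
          Nat.add_le_add (Nat.add_le_add hA le_rfl) (hB.trans hA)
      _ = 3 * μ (k + 1) := by ring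
  intro i
  induction i with
  | zero => simp [h1]
  | succ n ih =>
      calc μ (n + 1 + 1) ≤ 3 * μ (n + 1) := key n
        _ ≤ 3 * 3 ^ n := by omega
        _ = 3 ^ (n + 1) := (pow_succ' 3 n).symm
end

section
/- Let x be a string of length k ≥ 1 over an alphabet Σ whose characters are pairwise distinct (the map from positions to characters is injective). Then the number of distinct strings v of length k such that x has a utd-match with v is at most 3^{k−1}. -/
lemma utdmatch_length {α : Type*} {u v : List α} {t : ℕ} (h : UtdMatch u v t) :
    u.length = v.length := by
  induction h with
  | nil => rfl
  | same b _ ih => simp [ih]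
  | trans hz hw _ ih => simp only [List.length_append]; omega

lemma utd_first {α : Type*} {u v : List α} {t : ℕ} (h : UtdMatch u v t) (hu : u ≠ []) :
    (∃ b u' v', b ≠ [] ∧ u = b ++ u' ∧ v = b ++ v' ∧ Utd u' v') ∨
    (∃ z w u' v', z ≠ [] ∧ w ≠ [] ∧ u = z ++ w ++ u' ∧ v = w ++ z ++ v' ∧ Utd u' v') := by
  induction h with
  | nil => exact absurd rfl hu
  | same b h ih =>
      rcases eq_or_ne b [] with rfl | hb
      · simpa using ih (by simpa using hu)
      · exact Or.inl ⟨b, _, _, hb, rfl, rfl, _, h⟩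
  | trans hz hw h ih => exact Or.inr ⟨_, _, _, _, hz, hw, rfl, rfl, _, h⟩

lemma ncard_biUnion_le {α ι : Type*} (s : Finset ι) (f : ι → Set α) :
    (⋃ i ∈ s, f i).ncard ≤ ∑ i ∈ s, (f i).ncard := by
  classical
  induction s using Finset.induction with
  | empty => simp
  | insert _ _ hx ih =>
      rename_i a s
      rw [Finset.set_biUnion_insert, Finset.sum_insert hx]
      exact le_trans (Set.ncard_union_le _ _) (by omega)

-- arithmetic
lemma two_C (m : ℕ) : 2 * ∑ d ∈ Finset.range (m + 1), 3 ^ (d - 1) = 3 ^ m + 1 := by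
  induction m with
  | zero => simp
  | succ m ih =>
      rw [Finset.sum_range_succ, Nat.mul_add, ih]
      have : 3 ^ (m + 1 - 1) = 3 ^ m := by norm_num
      rw [this, pow_succ]
      ring

lemma S_succ {k : ℕ} :
    ∑ d ∈ Finset.range (k + 1), (k + 1 - d) * 3 ^ (d - 1)
      = (∑ d ∈ Finset.range k, (k - d) * 3 ^ (d - 1))
        + ∑ d ∈ Finset.range (k + 1), 3 ^ (d - 1) := by
  have h1 : ∀ d ∈ Finset.range (k + 1), (k + 1 - d) * 3 ^ (d - 1)
      = (k - d) * 3 ^ (d - 1) + 3 ^ (d - 1) := by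
    intro d hd
    rw [Finset.mem_range] at hd
    have : k + 1 - d = (k - d) + 1 := by omega
    rw [this, Nat.add_mul, Nat.one_mul]
  rw [Finset.sum_congr rfl h1, Finset.sum_add_distrib, Finset.sum_range_succ]
  have : (k - k) * 3 ^ (k - 1) = 0 := by simp
  rw [this, Nat.add_zero]

lemma S_le (k : ℕ) : ∑ d ∈ Finset.range k, (k - d) * 3 ^ (d - 1) ≤ 3 ^ (k - 1) := by
  induction k with
  | zero => simp
  | succ k ih =>
      rcases Nat.eq_zero_or_pos k with rfl | hk
      · simp
      rw [S_succ]
      have hC := two_C k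
      have h3 : 3 ^ (k + 1 - 1) = 3 ^ k := by norm_num
      have hkk : 3 ^ k = 3 * 3 ^ (k - 1) := by
        rw [← pow_succ']
        congr 1
        omega
      have h1 : 1 ≤ 3 ^ (k - 1) := Nat.one_le_pow _ _ (by norm_num)
      omega

lemma utd_nil {α : Type*} : {v : List α | Utd [] v} = {[]} := by
  ext v
  constructor
  · rintro ⟨t, h⟩
    have := utdmatch_length h
    simpa using (List.length_eq_zero_iff.mp this.symm)
  · rintro rfl
    exact ⟨0, UtdMatch.nil⟩

lemma aux_main {α : Type*} (n : ℕ) : ∀ (x : List α), x.length = n →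
    {v : List α | Utd x v}.Finite ∧ {v : List α | Utd x v}.ncard ≤ 3 ^ (n - 1) := by
  induction n using Nat.strong_induction_on with
  | _ n ih =>
  intro x hx
  rcases eq_or_ne x [] with rfl | hne
  · rw [utd_nil]
    simp at hx
    subst hx
    simp
  · -- x nonempty, n ≥ 1
    have hn1 : 1 ≤ n := by
      rcases Nat.eq_zero_or_pos n with rfl | h
      · exact absurd (List.length_eq_zero_iff.mp hx) hne
      · exact h
    -- block for suffix length d and rotation j
    set p : ℕ → ℕ → List α := fun d j =>
      (x.take (n - d)).drop j ++ (x.take (n - d)).take j with hp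
    have hcover : {v : List α | Utd x v} ⊆
        ⋃ d ∈ Finset.range n, ⋃ j ∈ Finset.range (n - d),
          (fun v' => p d j ++ v') '' {v : List α | Utd (x.drop (n - d)) v} := by
      rintro v ⟨t, h⟩
      rcases utd_first h hne with
        ⟨b, u', v', hb, hu, hv, hutd⟩ | ⟨z, w, u', v', hz, hw, hu, hv, hutd⟩
      · -- same block
        have hbl : 1 ≤ b.length := List.length_pos_iff.mpr hb
        have hlen : b.length + u'.length = n := by
          rw [← hx, hu]; simp
        refine Set.mem_biUnion (Finset.mem_range.mpr (show u'.length < n by omega)) ?_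
        refine Set.mem_biUnion (Finset.mem_range.mpr (show 0 < n - u'.length by omega)) ?_
        have hi : n - u'.length = b.length := by omega
        have htake : x.take (n - u'.length) = b := by
          rw [hi, hu, List.take_left]
        have hdrop : x.drop (n - u'.length) = u' := by
          rw [hi, hu, List.drop_left]
        refine ⟨v', by rw [hdrop]; exact hutd, ?_⟩
        simp only [hp, htake, List.drop_zero, List.take_zero, List.append_nil]
        exact hv.symm
      · -- translocated block
        have hzl : 1 ≤ z.length := List.length_pos_iff.mpr hz
        have hwl : 1 ≤ w.length := List.length_pos_iff.mpr hw
        have hlen : z.length + w.length + u'.length = n := by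
          rw [← hx, hu]; simp; omega
        refine Set.mem_biUnion (Finset.mem_range.mpr (show u'.length < n by omega)) ?_
        refine Set.mem_biUnion (Finset.mem_range.mpr
          (show z.length < n - u'.length by omega)) ?_
        have hi : n - u'.length = (z ++ w).length := by simp; omega
        have htake : x.take (n - u'.length) = z ++ w := by
          rw [hi, hu, List.take_left]
        have hdrop : x.drop (n - u'.length) = u' := by
          rw [hi, hu, List.drop_left]
        refine ⟨v', by rw [hdrop]; exact hutd, ?_⟩
        simp only [hp, htake]
        rw [List.drop_left' rfl, List.take_left' rfl, hv]
    have hfin_inner : ∀ d < n, {v : List α | Utd (x.drop (n - d)) v}.Finite ∧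
        {v : List α | Utd (x.drop (n - d)) v}.ncard ≤ 3 ^ (d - 1) := by
      intro d hd
      have hdl : (x.drop (n - d)).length = d := by
        rw [List.length_drop, hx]; omega
      have := ih d hd (x.drop (n - d)) hdl
      exact this
    have hfinU : (⋃ d ∈ Finset.range n, ⋃ j ∈ Finset.range (n - d),
        (fun v' => p d j ++ v') '' {v : List α | Utd (x.drop (n - d)) v}).Finite := by
      apply Set.Finite.biUnion (Finset.finite_toSet _)
      intro d hd
      apply Set.Finite.biUnion (Finset.finite_toSet _)
      intro j _
      exact ((hfin_inner d (by simpa using hd)).1).image _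
    constructor
    · exact Set.Finite.subset hfinU hcover
    · calc {v : List α | Utd x v}.ncard
          ≤ (⋃ d ∈ Finset.range n, ⋃ j ∈ Finset.range (n - d),
              (fun v' => p d j ++ v') '' {v : List α | Utd (x.drop (n - d)) v}).ncard :=
            Set.ncard_le_ncard hcover hfinU
        _ ≤ ∑ d ∈ Finset.range n, (⋃ j ∈ Finset.range (n - d),
              (fun v' => p d j ++ v') '' {v : List α | Utd (x.drop (n - d)) v}).ncard :=
            ncard_biUnion_le _ _
        _ ≤ ∑ d ∈ Finset.range n, ∑ j ∈ Finset.range (n - d),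
              ((fun v' => p d j ++ v') '' {v : List α | Utd (x.drop (n - d)) v}).ncard :=
            Finset.sum_le_sum (fun d _ => ncard_biUnion_le _ _)
        _ ≤ ∑ d ∈ Finset.range n, ∑ j ∈ Finset.range (n - d), 3 ^ (d - 1) := by
            apply Finset.sum_le_sum
            intro d hd
            apply Finset.sum_le_sum
            intro j _
            have h := hfin_inner d (by simpa using hd)
            calc ((fun v' => p d j ++ v') '' {v : List α | Utd (x.drop (n - d)) v}).ncard
                ≤ {v : List α | Utd (x.drop (n - d)) v}.ncard := Set.ncard_image_le h.1
              _ ≤ 3 ^ (d - 1) := h.2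
        _ = ∑ d ∈ Finset.range n, (n - d) * 3 ^ (d - 1) := by
            apply Finset.sum_congr rfl
            intro d _
            rw [Finset.sum_const, Finset.card_range, smul_eq_mul]
        _ ≤ 3 ^ (n - 1) := S_le n

/-- Let `x` be a string of length `k ≥ 1` whose characters are pairwise
distinct. Then the number of distinct strings `v` of length `k` such that `x` has a
utd-match with `v` is at most `3^(k−1)`. -/
theorem card_utd_matches_le {α : Type*} (x : List α) (k : ℕ)
    (hk : x.length = k) (hk1 : 1 ≤ k) (hnodup : x.Nodup) :
    {v : List α | v.length = k ∧ Utd x v}.Finite ∧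
      {v : List α | v.length = k ∧ Utd x v}.ncard ≤ 3 ^ (k - 1) := by
  have hset : {v : List α | v.length = k ∧ Utd x v} = {v : List α | Utd x v} := by
    ext v
    simp only [Set.mem_setOf_eq, and_iff_right_iff_imp]
    rintro ⟨t, h⟩
    rw [← utdmatch_length h, hk]
  rw [hset]
  exact aux_main k x hk
end

section
/- Let σ ≥ 2 be a real number, let m ≥ 1 be an integer, and let h̄ be an integer with 1 ≤ h̄ ≤ m such that m − h̄ + 1 < σ^{h̄}. Then Σ_{i=1}^{m} min(1, (m − i + 1)/σ^i) < (h̄ − 1) + σ/(σ − 1) ≤ h̄ + 1. -/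
/-- Let `σ ≥ 2` be a real number, `m ≥ 1` an integer, and `h̄` an integer
with `1 ≤ h̄ ≤ m` such that `m − h̄ + 1 < σ^h̄`. Then
`Σ_{i=1}^{m} min(1, (m − i + 1)/σ^i) < (h̄ − 1) + σ/(σ − 1) ≤ h̄ + 1`. -/
theorem expected_longest_factor_bound (σ : ℝ) (hσ : 2 ≤ σ) (m : ℕ) (hm : 1 ≤ m)
    (hbar : ℕ) (h1 : 1 ≤ hbar) (h2 : hbar ≤ m)
    (h3 : (m : ℝ) - hbar + 1 < σ ^ hbar) :
    (∑ i ∈ Finset.Icc 1 m, min 1 (((m : ℝ) - i + 1) / σ ^ i) <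
        ((hbar : ℝ) - 1) + σ / (σ - 1)) ∧
      ((hbar : ℝ) - 1) + σ / (σ - 1) ≤ (hbar : ℝ) + 1 := by
  have hσ1 : (1:ℝ) < σ := by linarith
  have hσ0 : (0:ℝ) < σ := by linarith
  constructor
  · -- split the sum at hbar
    have hsplit :
        ∑ i ∈ Finset.Ioc 0 (hbar-1), min 1 (((m:ℝ) - i + 1)/σ^i)
          + ∑ i ∈ Finset.Ioc (hbar-1) m, min 1 (((m:ℝ) - i + 1)/σ^i)
        = ∑ i ∈ Finset.Ioc 0 m, min 1 (((m:ℝ) - i + 1)/σ^i) :=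
      Finset.sum_Ioc_consecutive _ (Nat.zero_le _) (le_trans (Nat.sub_le _ _) h2)
    have hIcc : Finset.Icc 1 m = Finset.Ioc 0 m := by
      rw [← Finset.Icc_add_one_left_eq_Ioc]; rfl
    rw [hIcc, ← hsplit]
    have hfirst : ∑ i ∈ Finset.Ioc 0 (hbar-1), min 1 (((m:ℝ) - i + 1)/σ^i)
        ≤ (hbar : ℝ) - 1 := by
      calc ∑ i ∈ Finset.Ioc 0 (hbar-1), min 1 (((m:ℝ) - i + 1)/σ^i)
          ≤ ∑ i ∈ Finset.Ioc 0 (hbar-1), (1:ℝ) :=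
            Finset.sum_le_sum fun i _ => min_le_left _ _
        _ = ((hbar - 1 : ℕ) : ℝ) := by
            rw [Finset.sum_const, Nat.card_Ioc, Nat.sub_zero, nsmul_eq_mul, mul_one]
        _ = (hbar : ℝ) - 1 := by
            rw [Nat.cast_sub h1, Nat.cast_one]
    have hsecond : ∑ i ∈ Finset.Ioc (hbar-1) m, min 1 (((m:ℝ) - i + 1)/σ^i)
        < σ / (σ - 1) := by
      have hterm : ∀ i ∈ Finset.Ioc (hbar-1) m,
          min 1 (((m:ℝ) - i + 1)/σ^i) < (1/σ)^(i - hbar) := by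
        intro i hi
        rw [Finset.mem_Ioc] at hi
        have hhi : hbar ≤ i := by omega
        have him : i ≤ m := hi.2
        have hpow : σ ^ i = σ ^ hbar * σ ^ (i - hbar) := by
          rw [← pow_add, Nat.add_sub_cancel' hhi]
        have hppos : (0:ℝ) < σ ^ i := pow_pos hσ0 i
        have hppos' : (0:ℝ) < σ ^ (i - hbar) := pow_pos hσ0 _
        have hppos'' : (0:ℝ) < σ ^ hbar := pow_pos hσ0 _
        have hnum : ((m:ℝ) - i + 1) ≤ (m:ℝ) - hbar + 1 := by
          have : (hbar : ℝ) ≤ i := Nat.cast_le.mpr hhi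
          linarith
        have hlt : ((m:ℝ) - i + 1) < σ ^ hbar := lt_of_le_of_lt hnum h3
        have heq : (1/σ:ℝ)^(i - hbar) = σ ^ hbar / σ ^ i := by
          rw [hpow, div_pow, one_pow, eq_div_iff (by positivity)]
          field_simp
        have key : ((m:ℝ) - i + 1)/σ^i < (1/σ)^(i - hbar) := by
          rw [heq]
          exact div_lt_div_of_pos_right hlt hppos
        exact lt_of_le_of_lt (min_le_right _ _) key
      have hne : (Finset.Ioc (hbar-1) m).Nonempty := by
        refine ⟨hbar, ?_⟩
        rw [Finset.mem_Ioc]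
        omega
      have hlt1 : ∑ i ∈ Finset.Ioc (hbar-1) m, min 1 (((m:ℝ) - i + 1)/σ^i)
          < ∑ i ∈ Finset.Ioc (hbar-1) m, (1/σ)^(i - hbar) :=
        Finset.sum_lt_sum_of_nonempty hne hterm
      have hre : ∑ i ∈ Finset.Ioc (hbar-1) m, (1/σ)^(i - hbar)
          = ∑ j ∈ Finset.range (m - hbar + 1), (1/σ)^j := by
        refine Finset.sum_nbij' (fun i => i - hbar) (fun j => j + hbar) ?_ ?_ ?_ ?_ ?_
        · intro i hi
          simp only [Finset.mem_Ioc] at hi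
          simp only [Finset.mem_range]
          omega
        · intro j hj
          simp only [Finset.mem_range] at hj
          simp only [Finset.mem_Ioc]
          omega
        · intro i hi
          simp only [Finset.mem_Ioc] at hi
          omega
        · intro j hj
          omega
        · intro i hi; rfl
      have hgeom : ∑ j ∈ Finset.range (m - hbar + 1), (1/σ:ℝ)^j ≤ σ / (σ - 1) := by
        have hr0 : (0:ℝ) ≤ 1/σ := by positivity
        have hr1 : (1/σ:ℝ) < 1 := by rw [div_lt_one hσ0]; linarith
        calc ∑ j ∈ Finset.range (m - hbar + 1), (1/σ:ℝ)^j
            ≤ ∑' j : ℕ, (1/σ:ℝ)^j :=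
              Summable.sum_le_tsum _ (fun j _ => by positivity)
                (summable_geometric_of_lt_one hr0 hr1)
          _ = (1 - 1/σ)⁻¹ := tsum_geometric_of_lt_one hr0 hr1
          _ = σ / (σ - 1) := by
              rw [inv_eq_one_div]
              rw [div_eq_div_iff (ne_of_gt (by linarith : (0:ℝ) < 1 - 1/σ)) (ne_of_gt (by linarith : (0:ℝ) < σ - 1))]
              field_simp
      calc ∑ i ∈ Finset.Ioc (hbar-1) m, min 1 (((m:ℝ) - i + 1)/σ^i)
          < ∑ j ∈ Finset.range (m - hbar + 1), (1/σ)^j := by rw [← hre]; exact hlt1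
        _ ≤ σ / (σ - 1) := hgeom
    linarith
  · have hσs : (0:ℝ) < σ - 1 := by linarith
    have : σ / (σ - 1) ≤ 2 := by
      rw [div_le_iff₀ hσs]; linarith
    linarith
end

section
/- Let σ ≥ 2 be a real number, let m ≥ 1 be an integer, and let h̄ be an integer with 1 ≤ h̄ ≤ m such that m − h̄ + 1 < σ^{h̄}. Then Σ_{h=1}^{m} sqrt(min(1, (m − h + 1)/σ^h)) < (h̄ − 1) + sqrt(σ)/(sqrt(σ) − 1). -/
/-- Let `σ ≥ 2` be a real number, `m ≥ 1` an integer, and `h̄` an integer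
with `1 ≤ h̄ ≤ m` such that `m − h̄ + 1 < σ^h̄`. Then
`Σ_{h=1}^{m} sqrt(min(1, (m − h + 1)/σ^h)) < (h̄ − 1) + sqrt(σ)/(sqrt(σ) − 1)`. -/
theorem sum_sqrt_bound (σ : ℝ) (hσ : 2 ≤ σ) (m : ℕ) (hm : 1 ≤ m)
    (hbar : ℕ) (h1 : 1 ≤ hbar) (h2 : hbar ≤ m)
    (h3 : (m : ℝ) - hbar + 1 < σ ^ hbar) :
    ∑ h ∈ Finset.Icc 1 m, Real.sqrt (min 1 (((m : ℝ) - h + 1) / σ ^ h)) <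
      ((hbar : ℝ) - 1) + Real.sqrt σ / (Real.sqrt σ - 1) := by
  have hσ0 : (0:ℝ) < σ := by linarith
  set s := Real.sqrt σ with hs
  have hs1 : 1 < s := by
    rw [hs, show (1:ℝ) = Real.sqrt 1 by simp]
    exact Real.sqrt_lt_sqrt (by norm_num) (by linarith)
  have hs0 : (0:ℝ) < s := by linarith
  set f : ℕ → ℝ := fun h => Real.sqrt (min 1 (((m : ℝ) - h + 1) / σ ^ h)) with hf
  -- split the sum
  have hsplit : ∑ h ∈ Finset.Ioc 0 (hbar-1), f h + ∑ h ∈ Finset.Ioc (hbar-1) m, f h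
      = ∑ h ∈ Finset.Ioc 0 m, f h :=
    Finset.sum_Ioc_consecutive f (Nat.zero_le _) (by omega)
  have hIcc : Finset.Icc 1 m = Finset.Ioc 0 m := by
    ext x; simp [Nat.lt_iff_add_one_le]
  rw [hIcc, ← hsplit]
  -- first part
  have hb1 : ∑ h ∈ Finset.Ioc 0 (hbar-1), f h ≤ (hbar:ℝ) - 1 := by
    calc ∑ h ∈ Finset.Ioc 0 (hbar-1), f h ≤ ∑ h ∈ Finset.Ioc 0 (hbar-1), 1 := by
          apply Finset.sum_le_sum
          intro i _
          have : f i ≤ Real.sqrt 1 := Real.sqrt_le_sqrt (min_le_left _ _)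
          simpa using this
      _ = ((hbar:ℝ) - 1) := by
          simp [Nat.card_Ioc]
          push_cast [Nat.cast_sub h1]
          ring
  -- second part
  have hb2 : ∑ h ∈ Finset.Ioc (hbar-1) m, f h < s / (s - 1) := by
    have hIoc : Finset.Ioc (hbar-1) m = Finset.Icc hbar m := by
      ext x; constructor <;> intro hx <;> simp_all <;> omega
    rw [hIoc]
    have hterm : ∀ h ∈ Finset.Icc hbar m, f h ≤ (1/s) ^ (h - hbar) := by
      intro h hh
      simp only [Finset.mem_Icc] at hh
      have hle : ((m:ℝ) - h + 1) / σ ^ h ≤ σ ^ hbar / σ ^ h := by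
        gcongr
        have : (hbar:ℝ) ≤ (h:ℝ) := by exact_mod_cast hh.1
        linarith
      have hσpow : σ ^ hbar / σ ^ h = (1/σ) ^ (h - hbar) := by
        have hhh : σ ^ h = σ ^ hbar * σ ^ (h - hbar) := by
          rw [← pow_add]; congr 1; omega
        rw [div_pow, one_pow, hhh, div_mul_eq_div_div, div_self (by positivity), one_div]
      have : f h ≤ Real.sqrt ((1/σ) ^ (h - hbar)) := by
        apply Real.sqrt_le_sqrt
        exact (min_le_right _ _).trans (hle.trans_eq hσpow)
      have sqpow : ∀ (x:ℝ), 0 ≤ x → ∀ k : ℕ, Real.sqrt (x^k) = (Real.sqrt x)^k := by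
        intro x hx k
        induction k with
        | zero => simp
        | succ n ih => rw [pow_succ, pow_succ, Real.sqrt_mul (pow_nonneg hx n), ih]
      refine this.trans_eq ?_
      rw [sqpow _ (by positivity)]
      congr 1
      rw [one_div, Real.sqrt_inv, one_div, hs]
    calc ∑ h ∈ Finset.Icc hbar m, f h ≤ ∑ h ∈ Finset.Icc hbar m, (1/s) ^ (h - hbar) :=
          Finset.sum_le_sum hterm
      _ = ∑ i ∈ Finset.range (m + 1 - hbar), (1/s) ^ i := by
          rw [show Finset.Icc hbar m = Finset.Ico hbar (m+1) by
              rw [Nat.Icc_eq_range', Nat.Ico_eq_range'],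
            Finset.sum_Ico_eq_sum_range]
          apply Finset.sum_congr rfl
          intro i _
          congr 1
          omega
      _ < s / (s - 1) := by
          have hr1 : 1/s < 1 := by rw [div_lt_one hs0]; exact hs1
          have hr0 : (0:ℝ) < 1/s := by positivity
          have hne : (1/s : ℝ) ≠ 1 := ne_of_lt hr1
          rw [geom_sum_eq hne]
          set n := m + 1 - hbar
          have h1r : (0:ℝ) < 1 - 1/s := by linarith
          have hpow : (0:ℝ) < (1/s)^n := pow_pos hr0 n
          have key : ((1/s:ℝ)^n - 1)/((1/s) - 1) < 1/(1 - 1/s) := by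
            rw [show (1/s:ℝ)^n - 1 = -(1 - (1/s)^n) by ring,
              show (1/s:ℝ) - 1 = -(1 - 1/s) by ring, neg_div_neg_eq,
              div_lt_div_iff_of_pos_right h1r]
            linarith
          have heq : 1/(1 - 1/s) = s / (s - 1) := by
            rw [div_eq_div_iff (by linarith) (by linarith)]
            field_simp
          linarith [key, heq.symm.le]
  have hf0 : 0 ≤ ∑ h ∈ Finset.Ioc 0 (hbar-1), f h := by positivity
  linarith
end
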